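/- Let N, M, D, K be positive integers with M ≥ N, and let p_0, …, p_{M−1} be distinct nonzero complex numbers. Let V ∈ ℂ^{N×M} be the Vandermonde matrix with entries V_{n,m} = p_m^n (0 ≤ n < N, 0 ≤ m < M), let S ∈ ℂ^{M×N} be an injective matrix each of whose columns has at most D nonzero entries, and let Λ ∈ ℂ^{N×N} be an invertible diagonal matrix. Set Ψ = Λ V S. If c, c′ ∈ ℂ^N each have at most K nonzero entries and (Ψc)_n = (Ψc′)_n for all n in a block of 2DK consecutive indices {ℓ, ℓ+1, …, ℓ+2DK−1} ⊆ {0, …, N−1}, then c = c′. In other words, a K-sparse vector c is uniquely determined by any 2DK consecutive entries of Ψc. -/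

import Mathlib

/-!
The vector `a = S (c - c')` has at most `2DK` nonzero entries, and since `diagonal L` is
invertible, the agreement of `Ψ c` and `Ψ c'` on the block says that the shifted moments
`∑ₘ aₘ pₘ^(ℓ+j)` vanish for `j < 2DK`. Pairing these moments with the coefficients of the
Lagrange basis polynomial of the support of `a` at a node `m₀` (its degree is below `2DK`)
isolates `aₘ₀ pₘ₀^ℓ`, so `a = 0`, and injectivity of `S` gives `c = c'`.
-/

open scoped Classical

/-- The number of nonzero entries (the "ℓ₀ norm") of a vector. -/
noncomputable def l0 {ι : Type*} [Fintype ι] (x : ι → ℂ) : ℕ :=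
  (Finset.univ.filter (fun i => x i ≠ 0)).card

open Finset Polynomial Matrix

theorem l0_sub_le {ι : Type*} [Fintype ι] (c c' : ι → ℂ) : l0 (c - c') ≤ l0 c + l0 c' := by
  unfold l0
  refine (card_le_card fun j hj => ?_).trans (card_union_le _ _)
  simp only [mem_filter, mem_univ, true_and, mem_union, Pi.sub_apply] at hj ⊢
  by_contra! h
  exact hj (by rw [h.1, h.2, sub_zero])

theorem l0_mulVec_le {ι κ : Type*} [Fintype ι] [Fintype κ] (S : Matrix κ ι ℂ) {D : ℕ}
    (hS : ∀ j, (univ.filter fun i => S i j ≠ 0).card ≤ D) (x : ι → ℂ) :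
    l0 (S *ᵥ x) ≤ D * l0 x := by
  have hsupp : univ.filter (fun i => (S *ᵥ x) i ≠ 0) ⊆
      (univ.filter fun j => x j ≠ 0).biUnion fun j => univ.filter fun i => S i j ≠ 0 := by
    intro i hi
    simp only [mem_filter, mem_univ, true_and, mem_biUnion] at hi ⊢
    by_contra! h
    refine hi (sum_eq_zero fun j _ => ?_)
    by_cases hx : x j = 0
    · simp [hx]
    · simp [h j hx]
  calc l0 (S *ᵥ x) ≤ ∑ j ∈ univ.filter (fun j => x j ≠ 0), (univ.filter fun i => S i j ≠ 0).card :=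
        (card_le_card hsupp).trans card_biUnion_le
    _ ≤ ∑ _j ∈ univ.filter (fun j => x j ≠ 0), D := sum_le_sum fun j _ => hS j
    _ = D * l0 x := by rw [sum_const, smul_eq_mul, mul_comm]; rfl

theorem sum_mul_pow_mul_eval_eq_zero {R ι : Type*} [CommSemiring R] [Fintype ι] (a p : ι → R)
    {ℓ n : ℕ} (hmom : ∀ j < n, ∑ m, a m * p m ^ (ℓ + j) = 0) {q : R[X]} (hq : q.natDegree < n) :
    ∑ m, a m * p m ^ ℓ * q.eval (p m) = 0 := by
  calc ∑ m, a m * p m ^ ℓ * q.eval (p m)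
      = ∑ m, ∑ j ∈ range n, q.coeff j * (a m * p m ^ (ℓ + j)) := by
        refine sum_congr rfl fun m _ => ?_
        rw [eval_eq_sum_range' hq, mul_sum]
        exact sum_congr rfl fun j _ => by ring
    _ = ∑ j ∈ range n, q.coeff j * ∑ m, a m * p m ^ (ℓ + j) := by
        rw [sum_comm]
        simp only [mul_sum]
    _ = 0 := sum_eq_zero fun j hj => by rw [hmom j (mem_range.mp hj), mul_zero]

theorem eq_zero_of_shifted_moments_eq_zero {ι : Type*} [Fintype ι]
    (a p : ι → ℂ) (hp : ∀ m, p m ≠ 0) (hpinj : Function.Injective p) {ℓ n : ℕ}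
    (ha : l0 a ≤ n) (hmom : ∀ j < n, ∑ m, a m * p m ^ (ℓ + j) = 0) : a = 0 := by
  set T := univ.filter fun m => a m ≠ 0
  funext m₀
  by_contra hm₀
  have hm₀T : m₀ ∈ T := by simpa [T] using hm₀
  have hinj : Set.InjOn p T := hpinj.injOn
  have hdeg : (Lagrange.basis T p m₀).natDegree < n := by
    rw [Lagrange.natDegree_basis hinj hm₀T]
    have : 0 < T.card := card_pos.mpr ⟨m₀, hm₀T⟩
    exact lt_of_lt_of_le (Nat.sub_lt this one_pos) ha
  have hsum := sum_mul_pow_mul_eval_eq_zero a p hmom hdeg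
  rw [sum_eq_single m₀, Lagrange.eval_basis_self hinj hm₀T, mul_one] at hsum
  · exact mul_ne_zero hm₀ (pow_ne_zero ℓ (hp m₀)) hsum
  · intro m _ hm
    by_cases ham : a m = 0
    · simp [ham]
    · rw [Lagrange.eval_basis_of_ne (Ne.symm hm) (by simpa [T] using ham), mul_zero]
  · simp

/-- **Generalized Prony recovery.** Let `Ψ = Λ V S` with `Λ` an invertible diagonal matrix,
`V` the `N × M` Vandermonde matrix generated by distinct nonzero nodes `p 0, …, p (M-1)`
(`M ≥ N`), and `S` an injective `M × N` matrix whose columns have at most `D` nonzero entries.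
If `c, c'` each have at most `K` nonzero entries and `Ψ c` agrees with `Ψ c'` on a block of
`2 D K` consecutive indices contained in `{0, …, N-1}`, then `c = c'`. -/
theorem stmt17 (N M D K : ℕ)
    (p : Fin M → ℂ) (hp : ∀ m, p m ≠ 0) (hpinj : Function.Injective p)
    (V : Matrix (Fin N) (Fin M) ℂ) (hV : ∀ n m, V n m = p m ^ (n : ℕ))
    (S : Matrix (Fin M) (Fin N) ℂ) (hSinj : Function.Injective S.mulVec)
    (hScol : ∀ j : Fin N, (Finset.univ.filter (fun i => S i j ≠ 0)).card ≤ D)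
    (L : Fin N → ℂ) (hL : ∀ n, L n ≠ 0)
    (Ψ : Matrix (Fin N) (Fin N) ℂ) (hΨ : Ψ = Matrix.diagonal L * V * S)
    (c c' : Fin N → ℂ) (hc : l0 c ≤ K) (hc' : l0 c' ≤ K)
    (ℓ : ℕ) (hblock : ℓ + 2 * D * K ≤ N)
    (hagree : ∀ (j : ℕ) (hj : j < 2 * D * K),
      Ψ.mulVec c ⟨ℓ + j, by omega⟩ = Ψ.mulVec c' ⟨ℓ + j, by omega⟩) :
    c = c' := by
  set a := S *ᵥ (c - c')
  have hsparse : l0 a ≤ 2 * D * K :=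
    calc l0 a ≤ D * l0 (c - c') := l0_mulVec_le S hScol _
      _ ≤ D * (K + K) := Nat.mul_le_mul_left D ((l0_sub_le c c').trans (add_le_add hc hc'))
      _ = 2 * D * K := by ring
  have hmom : ∀ j < 2 * D * K, ∑ m, a m * p m ^ (ℓ + j) = 0 := by
    intro j hj
    have h := hagree j hj
    rw [← sub_eq_zero, ← Pi.sub_apply, ← mulVec_sub, hΨ, ← mulVec_mulVec, ← mulVec_mulVec,
      mulVec_diagonal] at h
    refine Eq.trans (sum_congr rfl fun m _ => ?_) ((mul_eq_zero.mp h).resolve_left (hL _))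
    simp only [hV, mul_comm, a]
  have ha : a = 0 := eq_zero_of_shifted_moments_eq_zero a p hp hpinj hsparse hmom
  exact sub_eq_zero.mp (hSinj (ha.trans (mulVec_zero S).symm))
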